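/- For any function f : X → Y, the map Path_∼(f) : Path_∼(X) → Path_∼(Y), defined by Path_∼(f)[p] = [f ∘ p], is order preserving: if ♮p ⪯ ♮q then ♮(f ∘ p) ⪯ ♮(f ∘ q), for all paths p, q on X. -/

import Mathlib

open scoped Classical ENNReal

namespace PaperBB

/-! ## Paths -/

/-- Words over the alphabet `A_τ = A ∪ {τ}`; `none` plays the role of the silent action `τ`. -/
abbrev Word (A : Type*) := List (Option A)

/-- A path on `X`: a function whose codomain is `X` and whose domain is the set of all
prefixes of some word `σ ∈ A_τ*`. -/
structure Path (A : Type*) (X : Type*) where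
  word : Word A
  fn : {σ : Word A // σ <+: word} → X

namespace Path

variable {A X Y : Type*}

theorem prefixSnoc (σ : Word A) (a : Option A) : σ <+: σ ++ [a] := ⟨[a], rfl⟩

theorem nilPrefix (w : Word A) : ([] : Word A) <+: w := ⟨w, rfl⟩

/-- The value `p(ε)` of a path at the empty word. -/
def start (p : Path A X) : X := p.fn ⟨[], nilPrefix _⟩

/-- The trace of a path: the maximal word in its domain. -/
def trace (p : Path A X) : Word A := p.word

/-- The last state reached by a path: `last p = p (trace p)`. -/
def last (p : Path A X) : X := p.fn ⟨p.word, List.prefix_refl _⟩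

/-- `Path(f)(p) = f ∘ p`. -/
def map (f : X → Y) (p : Path A X) : Path A Y := ⟨p.word, fun σ => f (p.fn σ)⟩

/-- The prefix order on paths: `p ⪯ q` iff `dom p ⊆ dom q` and `q` agrees with `p` on `dom p`. -/
def le (p q : Path A X) : Prop :=
  ∃ h : p.word <+: q.word, ∀ (σ : Word A) (hσ : σ <+: p.word),
    q.fn ⟨σ, hσ.trans h⟩ = p.fn ⟨σ, hσ⟩

/-- The strict prefix order on paths. -/
def lt (p q : Path A X) : Prop := p.le q ∧ p ≠ q

/-- `φ` is a stutter basis for the path `p`. -/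
def IsStutterBasis (p : Path A X) (φ : {σ : Word A // σ <+: p.word} → Word A) : Prop :=
  φ ⟨[], nilPrefix _⟩ = [] ∧
  (∀ (σ : Word A) (h : σ ++ [(none : Option A)] <+: p.word),
      (p.fn ⟨σ ++ [none], h⟩ = p.fn ⟨σ, (prefixSnoc σ none).trans h⟩ →
        φ ⟨σ ++ [none], h⟩ = φ ⟨σ, (prefixSnoc σ none).trans h⟩) ∧
      (p.fn ⟨σ ++ [none], h⟩ ≠ p.fn ⟨σ, (prefixSnoc σ none).trans h⟩ →
        φ ⟨σ ++ [none], h⟩ = φ ⟨σ, (prefixSnoc σ none).trans h⟩ ++ [none])) ∧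
  (∀ (σ : Word A) (a : A) (h : σ ++ [some a] <+: p.word),
      φ ⟨σ ++ [some a], h⟩ = φ ⟨σ, (prefixSnoc σ (some a)).trans h⟩ ++ [some a])

/-- Auxiliary recursion computing the stutter basis of `p` on the prefix of length `n`. -/
noncomputable def stutterWordAux (p : Path A X) : ℕ → Word A
  | 0 => []
  | n + 1 =>
    if h : n < p.word.length then
      if (p.word.get ⟨n, h⟩) = none ∧
          p.fn ⟨p.word.take (n + 1), List.take_prefix _ _⟩ =
            p.fn ⟨p.word.take n, List.take_prefix _ _⟩ then
        stutterWordAux p n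
      else stutterWordAux p n ++ [p.word.get ⟨n, h⟩]
    else []

/-- The (unique) stutter basis of a path `p`. -/
noncomputable def stutterBasis (p : Path A X) (σ : {σ : Word A // σ <+: p.word}) : Word A :=
  stutterWordAux p σ.1.length

/-- The stutter invariant path `♮p` relative to `p`: its domain is the image of the stutter
basis `φ` and it satisfies `♮p ∘ φ = p`. -/
noncomputable def stutter (p : Path A X) : Path A X where
  word := stutterBasis p ⟨p.word, List.prefix_refl _⟩
  fn := fun w =>
    haveI : Nonempty {σ : Word A // σ <+: p.word} := ⟨⟨[], nilPrefix _⟩⟩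
    p.fn (Function.invFun (stutterBasis p) w.1)

end Path

/-- Stutter equivalence of paths: `p ∼ q` iff `♮p = ♮q`. -/
def StutterEquiv {A X : Type*} (p q : Path A X) : Prop := p.stutter = q.stutter

instance pathSetoid (A X : Type*) : Setoid (Path A X) :=
  ⟨StutterEquiv, ⟨fun _ => rfl, Eq.symm, Eq.trans⟩⟩

/-- The set `Path_∼(X)` of paths up to stutter equivalence. -/
abbrev PathQuot (A X : Type*) := Quotient (pathSetoid A X)

/-- The quotient map `π : Path(X) → Path_∼(X)`. -/
def PathQuot.mk {A X : Type*} (p : Path A X) : PathQuot A X := Quotient.mk _ p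

/-- `Path_∼(f)[p] = [f ∘ p]`. -/
noncomputable def PathQuot.map {A X Y : Type*} (f : X → Y) (c : PathQuot A X) : PathQuot A Y :=
  PathQuot.mk (Path.map f c.out)

/-- The order on `Path_∼(X)`: `[p] ⪯ [q]` iff `♮p ⪯ ♮q`. -/
def PathQuot.le {A X : Type*} (c d : PathQuot A X) : Prop :=
  ∃ p q : Path A X, PathQuot.mk p = c ∧ PathQuot.mk q = d ∧ p.stutter.le q.stutter

/-- The set of words of the shape `τ*aτ*`. -/
def TauStarATauStar {A : Type*} (a : A) (w : Word A) : Prop :=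
  ∃ n m : ℕ, w = List.replicate n none ++ some a :: List.replicate m none

/-! ## Prefix orders, the sobrification `X∞`, Scott topology, valuations -/

section OrderTheory

variable {Z : Type*}

/-- Downward-closed subsets: the closed sets of the Alexandroff topology. -/
def IsDownClosed [Preorder Z] (C : Set Z) : Prop :=
  ∀ ⦃x⦄, x ∈ C → ∀ ⦃y⦄, y ≤ x → y ∈ C

/-- Irreducible closed subsets of the Alexandroff topology. -/
def IsIrredClosed [Preorder Z] (C : Set Z) : Prop :=
  IsDownClosed C ∧ C.Nonempty ∧
    ∀ C₁ C₂ : Set Z, IsDownClosed C₁ → IsDownClosed C₂ → C = C₁ ∪ C₂ → C = C₁ ∨ C = C₂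

/-- A set is non-sober if it is irreducible and closed (w.r.t. the Alexandroff topology) but is
not the closure (the principal ideal) of any single point. -/
def NonSober [Preorder Z] (C : Set Z) : Prop :=
  IsIrredClosed C ∧ ¬ ∃ x : Z, C = {y | y ≤ x}

/-- `X∞`: `X` together with a fresh limit point `∞_C` for every non-sober `C ⊆ X`. -/
def Extended (Z : Type*) [Preorder Z] := Z ⊕ {C : Set Z // NonSober C}

/-- The order `⪯'` on `X∞` extending `⪯` by `∞_C ⪯' ∞_C` and `x ⪯' ∞_C` for `x ∈ C`. -/
def extLE [Preorder Z] : Extended Z → Extended Z → Prop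
  | Sum.inl x, Sum.inl y => x ≤ y
  | Sum.inl x, Sum.inr C => x ∈ C.1
  | Sum.inr _, Sum.inl _ => False
  | Sum.inr C, Sum.inr D => C = D

instance [PartialOrder Z] : PartialOrder (Extended Z) where
  le := extLE
  le_refl a := by
    cases a with
    | inl x => exact le_refl x
    | inr C => exact rfl
  le_trans a b c hab hbc := by
    cases a with
    | inl x =>
      cases b with
      | inl y =>
        cases c with
        | inl z => exact le_trans hab hbc
        | inr C => exact C.2.1.1 hbc hab
      | inr C =>
        cases c with
        | inl z => exact False.elim hbc
        | inr D => exact (show C = D from hbc) ▸ hab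
    | inr C =>
      cases b with
      | inl y => exact False.elim hab
      | inr D =>
        cases c with
        | inl z => exact False.elim hbc
        | inr E => exact (show C = D from hab).trans (show D = E from hbc)
  le_antisymm a b hab hba := by
    cases a with
    | inl x =>
      cases b with
      | inl y => exact congrArg Sum.inl (le_antisymm hab hba)
      | inr C => exact False.elim hba
    | inr C =>
      cases b with
      | inl y => exact False.elim hab
      | inr D => exact congrArg Sum.inr hab

/-- Scott-open subsets: upward closed and inaccessible by directed joins. -/
def ScottOpen {W : Type*} [Preorder W] (U : Set W) : Prop :=
  (∀ ⦃x y⦄, x ∈ U → x ≤ y → y ∈ U) ∧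
  ∀ D : Set W, D.Nonempty → DirectedOn (· ≤ ·) D → ∀ s : W, IsLUB D s → s ∈ U →
    (D ∩ U).Nonempty

/-- Scott-closed subsets. -/
def ScottClosed {W : Type*} [Preorder W] (C : Set W) : Prop := ScottOpen Cᶜ

end OrderTheory

section Valuation

variable {W : Type*}

/-- A valuation on a collection `Op` of open sets: strict, monotone and modular. -/
def IsValuationOn (Op : Set (Set W)) (μ : Set W → ℝ≥0∞) : Prop :=
  μ ∅ = 0 ∧
  (∀ U ∈ Op, ∀ V ∈ Op, U ⊆ V → μ U ≤ μ V) ∧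
  (∀ U ∈ Op, ∀ V ∈ Op, μ U + μ V = μ (U ∪ V) + μ (U ∩ V))

/-- Scott continuity of a valuation: it commutes with unions of directed families of opens. -/
def IsScottContinuousOn (Op : Set (Set W)) (μ : Set W → ℝ≥0∞) : Prop :=
  ∀ 𝒟 : Set (Set W), 𝒟.Nonempty → (∀ U ∈ 𝒟, U ∈ Op) → DirectedOn (· ⊆ ·) 𝒟 →
    μ (⋃₀ 𝒟) = ⨆ U ∈ 𝒟, μ U

/-- Local finiteness: every point has a finitely valued open neighbourhood. -/
def IsLocallyFiniteOn (Op : Set (Set W)) (μ : Set W → ℝ≥0∞) : Prop :=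
  ∀ x : W, ∃ U ∈ Op, x ∈ U ∧ μ U < ⊤

/-- The open sets of the Alexandroff topology of a preorder: the upward-closed sets. -/
def UpClosedSets (W : Type*) [Preorder W] : Set (Set W) :=
  {U | ∀ ⦃x y⦄, x ∈ U → x ≤ y → y ∈ U}

/-- The Scott-open subsets of a preorder. -/
def ScottOpens (W : Type*) [Preorder W] : Set (Set W) := {U | ScottOpen U}

end Valuation

/-- The separation closure `U* = {x ∈ U | cl {x} ∩ U = {x}}` of a subset of a
topological space. -/
def sepClosure {W : Type*} [TopologicalSpace W] (U : Set W) : Set W :=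
  {x ∈ U | closure {x} ∩ U = {x}}

/-! ## Fully probabilistic transition systems -/

section Prob

variable {A X : Type*}

/-- A fully probabilistic transition system. -/
structure FPTS (A X : Type*) where
  P : X → Option A → X → ℝ≥0∞
  le_one : ∀ x a y, P x a y ≤ 1
  finite_support : ∀ x : X, {q : Option A × X | 0 < P x q.1 q.2}.Finite
  total : ∀ x : X,
    (∑' q : Option A × X, P x q.1 q.2) = 0 ∨ (∑' q : Option A × X, P x q.1 q.2) = 1

/-- `p` is an execution from `x`. -/
def IsExec (S : FPTS A X) (x : X) (p : Path A X) : Prop :=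
  p.start = x ∧
  ∀ (σ : Word A) (a : Option A) (h : σ ++ [a] <+: p.word),
    0 < S.P (p.fn ⟨σ, (Path.prefixSnoc σ a).trans h⟩) a (p.fn ⟨σ ++ [a], h⟩)

/-- The weight function `μ_P` on paths: the product of the transition probabilities along an
execution, and `0` on paths that are not executions. -/
noncomputable def pathWeight (S : FPTS A X) (p : Path A X) : ℝ≥0∞ :=
  if ∃ x : X, IsExec S x p then
    ∏ i : Fin p.word.length,
      S.P (p.fn ⟨p.word.take i.1, List.take_prefix _ _⟩)
          (p.word.get i)
          (p.fn ⟨p.word.take (i.1 + 1), List.take_prefix _ _⟩)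
  else 0

/-- `x →_L Y`: executions from `x` with trace in `L`, last state in `Y`, and no strict prefix
witnessing the same. -/
def stepSet (S : FPTS A X) (x : X) (L : Set (Word A)) (Y : Set X) : Set (Path A X) :=
  {p | IsExec S x p ∧ p.trace ∈ L ∧ p.last ∈ Y ∧
       ∀ q : Path A X, q.lt p → q.trace ∈ L → q.last ∉ Y}

/-- `x ⇒_L Y`: paths starting in `x` with trace in `L` and last state in `Y`. -/
def reachSet (x : X) (L : Set (Word A)) (Y : Set X) : Set (Path A X) :=
  {p | p.start = x ∧ p.trace ∈ L ∧ p.last ∈ Y}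

/-- The separation closure `U*` of a set of paths (w.r.t. the prefix order). -/
def sepMin (U : Set (Path A X)) : Set (Path A X) :=
  {p ∈ U | ∀ q ∈ U, q.le p → q = p}

/-- The upward-closed sets of paths: the opens of the Alexandroff topology on `Path(X)`. -/
def pathUpSets (A X : Type*) : Set (Set (Path A X)) :=
  {U | ∀ p ∈ U, ∀ q : Path A X, p.le q → q ∈ U}

end Prob

/-! ## Labelled transition systems -/

section LTS

variable {A X : Type}

/-- `p` is an execution of the labelled transition system `Tr` from `x`. -/
def IsExecLTS (Tr : X → Option A → X → Prop) (x : X) (p : Path A X) : Prop :=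
  p.start = x ∧
  ∀ (σ : Word A) (a : Option A) (h : σ ++ [a] <+: p.word),
    Tr (p.fn ⟨σ, (Path.prefixSnoc σ a).trans h⟩) a (p.fn ⟨σ ++ [a], h⟩)

/-- Branching bisimulation. -/
def IsBranchingBisim (Tr : X → Option A → X → Prop) (R : X → X → Prop) : Prop :=
  Symmetric R ∧
  ∀ (x x' y : X) (a : Option A), Tr x a x' → R x y →
    (a = none ∧ R x' y) ∨
    ∃ y' y'' : X, Relation.ReflTransGen (fun u v => Tr u none v) y y' ∧
      Tr y' a y'' ∧ R x y' ∧ R x' y''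

/-- Two states are branching bisimilar if some branching bisimulation relates them. -/
def BranchingBisimilar (Tr : X → Option A → X → Prop) (x x' : X) : Prop :=
  ∃ R : X → X → Prop, IsBranchingBisim Tr R ∧ R x x'

/-- The path-based coalgebra `α : X → P(Path_∼ X)` of a labelled transition system: the
stutter classes of executions from `x` with trace in `τ*a` (for some `a ∈ A`) or in `τ*`. -/
def ltsAlpha (Tr : X → Option A → X → Prop) (x : X) : Set (PathQuot A X) :=
  {c | ∃ p : Path A X, IsExecLTS Tr x p ∧
    ((∃ (a : A) (n : ℕ), p.word = List.replicate n none ++ [some a]) ∨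
     (∃ n : ℕ, p.word = List.replicate n (none : Option A))) ∧
    c = PathQuot.mk p}

end LTS

/-!
The stutter reduction `♮` is monotone for the prefix order, and `♮(f ∘ ♮p) = ♮(f ∘ p)`:
every stutter step of `p` (a `τ`-step that stays in the same state) is still a stutter step
of `f ∘ p`, so deleting the stutter steps of `p` before applying `f` changes nothing.
Hence `♮p ⪯ ♮q` gives `f ∘ ♮p ⪯ f ∘ ♮q`, then `♮(f ∘ ♮p) ⪯ ♮(f ∘ ♮q)`, i.e.
`♮(f ∘ p) ⪯ ♮(f ∘ q)`; the same identity shows that `[p] ↦ [f ∘ p]` is well defined.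
-/

namespace Path

variable {A X Y : Type*}

/-- For `n` beyond the length of `p` this is the last state of `p`. -/
def state (p : Path A X) (n : ℕ) : X := p.fn ⟨p.word.take n, List.take_prefix _ _⟩

theorem fn_eq_state (p : Path A X) {σ : Word A} (h : σ <+: p.word) :
    p.fn ⟨σ, h⟩ = p.state σ.length := by
  unfold state
  congr
  exact List.prefix_iff_eq_take.mp h

@[simp]
theorem state_map (f : X → Y) (p : Path A X) (n : ℕ) : (p.map f).state n = f (p.state n) :=
  rfl

theorem le_of_state_eq {p q : Path A X} (hw : p.word <+: q.word)
    (hs : ∀ n ≤ p.word.length, q.state n = p.state n) : p.le q :=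
  ⟨hw, fun σ hσ => by rw [fn_eq_state, fn_eq_state]; exact hs _ hσ.length_le⟩

theorem le.state_eq {p q : Path A X} (h : p.le q) {n : ℕ} (hn : n ≤ p.word.length) :
    q.state n = p.state n := by
  obtain ⟨hw, hfn⟩ := h
  calc q.state n = q.fn ⟨p.word.take n, (List.take_prefix _ _).trans hw⟩ := by
        rw [fn_eq_state, List.length_take_of_le hn]
    _ = p.state n := hfn _ _

theorem le.map {p q : Path A X} (h : p.le q) (f : X → Y) : (p.map f).le (q.map f) :=
  ⟨h.1, fun σ hσ => congrArg f (h.2 σ hσ)⟩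

theorem eq_of_le_of_word_eq {p q : Path A X} (h : p.le q) (hw : p.word = q.word) : p = q := by
  obtain ⟨w, fp⟩ := p
  obtain ⟨w', fq⟩ := q
  obtain rfl : w = w' := hw
  congr
  funext σ
  exact (h.2 σ.1 σ.2).symm

def IsStutterStep (p : Path A X) (n : ℕ) : Prop :=
  p.word[n]? = some none ∧ p.state (n + 1) = p.state n

theorem IsStutterStep.map {p : Path A X} {n : ℕ} (h : p.IsStutterStep n) (f : X → Y) :
    (p.map f).IsStutterStep n :=
  ⟨h.1, congrArg f h.2⟩

theorem stutterWordAux_succ (p : Path A X) {n : ℕ} (hn : n < p.word.length) :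
    stutterWordAux p (n + 1) =
      if p.IsStutterStep n then stutterWordAux p n else stutterWordAux p n ++ [p.word[n]] := by
  simp only [stutterWordAux, dif_pos hn, IsStutterStep, List.getElem?_eq_getElem hn,
    Option.some_inj, List.get_eq_getElem]
  rfl

theorem stutterWordAux_succ_of_isStutterStep (p : Path A X) {n : ℕ}
    (hn : n < p.word.length) (h : p.IsStutterStep n) :
    stutterWordAux p (n + 1) = stutterWordAux p n := by
  rw [stutterWordAux_succ p hn, if_pos h]

theorem stutterWordAux_succ_of_not_isStutterStep (p : Path A X) {n : ℕ}
    (hn : n < p.word.length) (h : ¬ p.IsStutterStep n) :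
    stutterWordAux p (n + 1) = stutterWordAux p n ++ [p.word[n]] := by
  rw [stutterWordAux_succ p hn, if_neg h]

theorem stutterWordAux_prefix_succ (p : Path A X) {n : ℕ} (hn : n < p.word.length) :
    stutterWordAux p n <+: stutterWordAux p (n + 1) := by
  rw [stutterWordAux_succ p hn]
  split
  · exact List.prefix_refl _
  · exact prefixSnoc _ _

theorem length_stutterWordAux_succ_le (p : Path A X) (n : ℕ) :
    (stutterWordAux p (n + 1)).length ≤ (stutterWordAux p n).length + 1 := by
  by_cases hn : n < p.word.length
  · rw [stutterWordAux_succ p hn]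
    split <;> simp
  · simp [stutterWordAux, hn]

theorem stutterWordAux_prefix_of_le (p : Path A X) {m n : ℕ} (hmn : m ≤ n)
    (hn : n ≤ p.word.length) : stutterWordAux p m <+: stutterWordAux p n := by
  induction n, hmn using Nat.le_induction with
  | base => exact List.prefix_refl _
  | succ n _ ih => exact (ih (by omega)).trans (stutterWordAux_prefix_succ p hn)

/-- `stutterWordAux p` grows by at most one letter per step, so it passes through every length. -/
theorem exists_length_stutterWordAux_eq (p : Path A X) {k n : ℕ}
    (hk : k ≤ (stutterWordAux p n).length) : ∃ m ≤ n, (stutterWordAux p m).length = k := by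
  induction n with
  | zero =>
    simp only [stutterWordAux, List.length_nil, Nat.le_zero] at hk
    exact ⟨0, le_rfl, by simp [stutterWordAux, hk]⟩
  | succ n ih =>
    by_cases hkn : k ≤ (stutterWordAux p n).length
    · obtain ⟨m, hm, hmk⟩ := ih hkn
      exact ⟨m, by omega, hmk⟩
    · exact ⟨n + 1, le_rfl, by have := length_stutterWordAux_succ_le p n; omega⟩

theorem state_eq_of_stutterWordAux_eq_of_le (p : Path A X) {m n : ℕ} (hmn : m ≤ n)
    (hn : n ≤ p.word.length) (he : stutterWordAux p m = stutterWordAux p n) :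
    p.state m = p.state n := by
  induction n, hmn using Nat.le_induction with
  | base => rfl
  | succ n hmn ih =>
    have hstep : stutterWordAux p n = stutterWordAux p (n + 1) :=
      (stutterWordAux_prefix_succ p hn).eq_of_length <| le_antisymm
        (stutterWordAux_prefix_succ p hn).length_le
        (he ▸ (stutterWordAux_prefix_of_le p hmn (by omega)).length_le)
    have hstutter : p.IsStutterStep n := by
      by_contra h
      have := congrArg List.length (stutterWordAux_succ_of_not_isStutterStep p hn h ▸ hstep)
      simp at this
    rw [ih (by omega) (he.trans hstep.symm), hstutter.2]

theorem state_eq_of_stutterWordAux_eq (p : Path A X) {m n : ℕ} (hm : m ≤ p.word.length)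
    (hn : n ≤ p.word.length) (he : stutterWordAux p m = stutterWordAux p n) :
    p.state m = p.state n := by
  rcases le_total m n with h | h
  · exact state_eq_of_stutterWordAux_eq_of_le p h hn he
  · exact (state_eq_of_stutterWordAux_eq_of_le p h hm he.symm).symm

theorem stutter_word (p : Path A X) : p.stutter.word = stutterWordAux p p.word.length := rfl

theorem stutter_state_length_stutterWordAux (p : Path A X) {n : ℕ} (hn : n ≤ p.word.length) :
    p.stutter.state (stutterWordAux p n).length = p.state n := by
  have hpre : stutterWordAux p n <+: p.stutter.word := stutterWordAux_prefix_of_le p hn le_rfl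
  have hne : Nonempty {σ : Word A // σ <+: p.word} := ⟨⟨[], nilPrefix _⟩⟩
  have hex : ∃ σ, stutterBasis p σ = stutterWordAux p n :=
    ⟨⟨p.word.take n, List.take_prefix _ _⟩, by simp [stutterBasis, List.length_take_of_le hn]⟩
  set σ := Function.invFun (stutterBasis p) (stutterWordAux p n)
  calc p.stutter.state (stutterWordAux p n).length
      = p.fn σ := (fn_eq_state _ hpre).symm
    _ = p.state σ.1.length := fn_eq_state p σ.2
    _ = p.state n :=
      state_eq_of_stutterWordAux_eq p σ.2.length_le hn (Function.invFun_eq hex)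

theorem stutterWordAux_succ_eq_of_step_iff {Z : Type*} {p : Path A X} {r : Path A Z} {n k : ℕ}
    (hn : n < p.word.length) (hk : k < r.word.length) (hletter : r.word[k] = p.word[n])
    (hstep : r.IsStutterStep k ↔ p.IsStutterStep n)
    (he : stutterWordAux r k = stutterWordAux p n) :
    stutterWordAux r (k + 1) = stutterWordAux p (n + 1) := by
  rw [stutterWordAux_succ r hk, stutterWordAux_succ p hn, hletter, he]
  exact if_congr hstep rfl rfl

theorem stutter_le_stutter_of_reindex {p r : Path A X} (g : ℕ → ℕ)
    (hg : ∀ n ≤ p.word.length, g n ≤ r.word.length)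
    (hu : ∀ n ≤ p.word.length, stutterWordAux r (g n) = stutterWordAux p n)
    (hs : ∀ n ≤ p.word.length, r.state (g n) = p.state n) : p.stutter.le r.stutter := by
  refine le_of_state_eq ?_ fun k hk => ?_
  · rw [stutter_word, stutter_word, ← hu _ le_rfl]
    exact stutterWordAux_prefix_of_le r (hg _ le_rfl) le_rfl
  · obtain ⟨m, hm, rfl⟩ := exists_length_stutterWordAux_eq p hk
    rw [← hu m hm, stutter_state_length_stutterWordAux r (hg m hm), hu m hm,
      stutter_state_length_stutterWordAux p hm, hs m hm]

theorem stutterWordAux_eq_of_le {p q : Path A X} (h : p.le q) {n : ℕ} (hn : n ≤ p.word.length) :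
    stutterWordAux q n = stutterWordAux p n := by
  induction n with
  | zero => rfl
  | succ n ih =>
    have hlt : n < p.word.length := hn
    have hltq : n < q.word.length := hlt.trans_le h.1.length_le
    have hletter : q.word[n] = p.word[n] := (h.1.getElem hlt).symm
    refine stutterWordAux_succ_eq_of_step_iff hlt hltq hletter ?_ (ih hlt.le)
    rw [IsStutterStep, IsStutterStep, List.getElem?_eq_getElem hltq,
      List.getElem?_eq_getElem hlt, hletter, h.state_eq hn, h.state_eq hlt.le]

theorem stutter_le_stutter {p q : Path A X} (h : p.le q) : p.stutter.le q.stutter :=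
  stutter_le_stutter_of_reindex id (fun _ hn => hn.trans h.1.length_le)
    (fun _ hn => stutterWordAux_eq_of_le h hn) (fun _ hn => h.state_eq hn)

theorem stutterWordAux_stutter_map (f : X → Y) (p : Path A X) {n : ℕ}
    (hn : n ≤ p.word.length) :
    stutterWordAux (p.stutter.map f) (stutterWordAux p n).length =
      stutterWordAux (p.map f) n := by
  induction n with
  | zero => rfl
  | succ n ih =>
    have hlt : n < p.word.length := hn
    by_cases hs : p.IsStutterStep n
    · rw [stutterWordAux_succ_of_isStutterStep p hlt hs, ih hlt.le,
        stutterWordAux_succ_of_isStutterStep (p.map f) hlt (hs.map f)]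
    have hsucc := stutterWordAux_succ_of_not_isStutterStep p hlt hs
    have hpre : stutterWordAux p n ++ [p.word[n]] <+: (p.stutter.map f).word :=
      hsucc ▸ stutterWordAux_prefix_of_le p hn le_rfl
    have hk : (stutterWordAux p n).length < (p.stutter.map f).word.length := by
      simpa using hpre.length_le
    have hletter : (p.stutter.map f).word[(stutterWordAux p n).length] = (p.map f).word[n] := by
      rw [← hpre.getElem (by simp)]
      simp [map]
    have hlen : (stutterWordAux p n).length + 1 = (stutterWordAux p (n + 1)).length := by
      simp [hsucc]
    rw [hsucc, List.length_append, List.length_singleton]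
    refine stutterWordAux_succ_eq_of_step_iff (p := p.map f) hlt hk hletter ?_ (ih hlt.le)
    rw [IsStutterStep, IsStutterStep, List.getElem?_eq_getElem hk,
      List.getElem?_eq_getElem (show n < (p.map f).word.length from hlt), hletter, state_map,
      state_map, hlen, stutter_state_length_stutterWordAux p hn,
      stutter_state_length_stutterWordAux p hlt.le, state_map, state_map]
    exact Iff.rfl

theorem stutter_map_stutter (f : X → Y) (p : Path A X) :
    (p.stutter.map f).stutter = (p.map f).stutter := by
  refine (eq_of_le_of_word_eq ?_ (stutterWordAux_stutter_map f p le_rfl).symm).symm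
  refine stutter_le_stutter_of_reindex (fun n => (stutterWordAux p n).length)
    (fun n hn => (stutterWordAux_prefix_of_le p hn le_rfl).length_le)
    (fun n hn => stutterWordAux_stutter_map f p hn) fun n hn => ?_
  simp only [state_map, stutter_state_length_stutterWordAux p hn]

theorem stutter_map_congr (f : X → Y) {p q : Path A X} (h : p.stutter = q.stutter) :
    (p.map f).stutter = (q.map f).stutter := by
  rw [← stutter_map_stutter, h, stutter_map_stutter]

end Path

theorem stmt9 {A X Y : Type*} (f : X → Y) :
    (∀ p q : Path A X, p.stutter.le q.stutter →
      (p.map f).stutter.le ((q.map f).stutter)) ∧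
    (∀ c d : PathQuot A X, PathQuot.le c d →
      PathQuot.le (PathQuot.map f c) (PathQuot.map f d)) := by
  have hmono : ∀ p q : Path A X, p.stutter.le q.stutter →
      (p.map f).stutter.le (q.map f).stutter := fun p q h => by
    simpa only [Path.stutter_map_stutter] using Path.stutter_le_stutter (h.map f)
  refine ⟨hmono, ?_⟩
  rintro c d ⟨p, q, rfl, rfl, h⟩
  have hout (r : Path A X) : ((PathQuot.mk r).out.map f).stutter = (r.map f).stutter :=
    Path.stutter_map_congr f (Quotient.mk_out r)
  refine ⟨_, _, rfl, rfl, ?_⟩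
  rw [hout p, hout q]
  exact hmono p q h

end PaperBB
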